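/- Let k, l ≥ 1 be integers and b ∈ ℝ^l. Define for a ∈ ℝ^k the linear map f_a : ℤ^k → ℝ, u ↦ u·a, and h_b : ℤ^l → ℝ, v ↦ v·b. Then the set R = {a ∈ ℝ^k : ker(f_a) = {0} and f_a(ℤ^k) ∩ h_b(ℤ^l) = {0}} is a countable intersection of open dense subsets of ℝ^k (in particular, R is dense in ℝ^k by Baire's theorem). -/

import Mathlib

/-!
For `u ≠ 0` in `ℤᵏ` and `c ∈ ℝ`, the set `{a | u·a ≠ c}` is the complement of a proper affine
hyperplane, hence open and dense. The set `R` is exactly the intersection of these sets over the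
countably many pairs `(u, c)` with `u ≠ 0` and `c = v·b` for some `v ∈ ℤˡ`.
-/

open Set Function

theorem exists_nat_iInter_eq_iInter {X ι : Type*} [Countable ι] (P : Set X → Prop)
    (hP : P univ) (T : ι → Set X) (hT : ∀ i, P (T i)) :
    ∃ S : ℕ → Set X, (∀ n, P (S n)) ∧ ⋂ n, S n = ⋂ i, T i := by
  -- padding the family with `univ` at `none` makes it nonempty, so `ℕ` enumerates it
  obtain ⟨e, he⟩ := exists_surjective_nat (Option ι)
  have hP' : ∀ o : Option ι, P (o.elim univ T) := fun o => by cases o <;> simp [hP, hT]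
  refine ⟨fun n => (e n).elim univ T, fun n => hP' (e n), ?_⟩
  rw [he.iInter_comp (fun o => o.elim univ T), iInter_option]
  simp

theorem ContinuousLinearMap.isOpen_dense_setOf_ne {𝕜 E : Type*} [NontriviallyNormedField 𝕜]
    [CompleteSpace 𝕜] [NormedAddCommGroup E] [NormedSpace 𝕜 E] [CompleteSpace E]
    {φ : E →L[𝕜] 𝕜} (hφ : φ ≠ 0) (c : 𝕜) : IsOpen {x | φ x ≠ c} ∧ Dense {x | φ x ≠ c} := by
  have hsurj : Surjective φ :=
    LinearMap.surjective_of_ne_zero (f := (φ : E →ₗ[𝕜] 𝕜)) (by exact_mod_cast hφ)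
  exact ⟨isOpen_ne_fun φ.continuous continuous_const,
    (dense_compl_singleton c).preimage (φ.isOpenMap hsurj)⟩

section IntDot

variable {ι : Type*} [Fintype ι]

def intDot (u : ι → ℤ) : (ι → ℝ) →L[ℝ] ℝ :=
  ∑ i, (u i : ℝ) • ContinuousLinearMap.proj i

theorem intDot_apply (u : ι → ℤ) (a : ι → ℝ) : intDot u a = ∑ i, (u i : ℝ) * a i := by
  simp [intDot]

theorem intDot_ne_zero {u : ι → ℤ} (hu : u ≠ 0) : intDot u ≠ 0 := by
  classical
  obtain ⟨i, hi⟩ := Function.ne_iff.mp hu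
  intro h
  have h_single := congrArg (fun φ => φ (Pi.single i 1)) h
  exact hi (by simpa [intDot_apply, Pi.single_apply] using h_single)

theorem setOf_dot_injective_and_disjoint_eq_iInter {κ : Type*} [Fintype κ] (b : κ → ℝ) :
    {a : ι → ℝ |
        (∀ u : ι → ℤ, (∑ i, (u i : ℝ) * a i) = 0 → u = 0) ∧
        (∀ (u : ι → ℤ) (v : κ → ℤ),
          (∑ i, (u i : ℝ) * a i) = (∑ j, (v j : ℝ) * b j) →
          (∑ i, (u i : ℝ) * a i) = 0)} =
      ⋂ p : {u : ι → ℤ // u ≠ 0} × (κ → ℤ), {a | intDot p.1.1 a ≠ intDot p.2 b} := by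
  ext a
  simp only [mem_ofPred_eq, mem_iInter, intDot_apply]
  constructor
  · rintro ⟨hinj, hdisj⟩ ⟨⟨u, hu⟩, v⟩ heq
    exact hu (hinj u (hdisj u v heq))
  · intro h
    have hinj : ∀ u : ι → ℤ, (∑ i, (u i : ℝ) * a i) = 0 → u = 0 := fun u hu0 =>
      by_contra fun hu => h ⟨⟨u, hu⟩, 0⟩ (by simpa using hu0)
    refine ⟨hinj, fun u v heq => by_contra fun h0 => ?_⟩
    have hu : u ≠ 0 := by rintro rfl; simp at h0
    exact h ⟨⟨u, hu⟩, v⟩ heq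

end IntDot

theorem stmt0_general (k l : ℕ) (b : Fin l → ℝ) :
    ∃ S : ℕ → Set (Fin k → ℝ),
      (∀ n, IsOpen (S n) ∧ Dense (S n)) ∧
      {a : Fin k → ℝ |
        (∀ u : Fin k → ℤ, (∑ i, (u i : ℝ) * a i) = 0 → u = 0) ∧
        (∀ (u : Fin k → ℤ) (v : Fin l → ℤ),
          (∑ i, (u i : ℝ) * a i) = (∑ j, (v j : ℝ) * b j) →
          (∑ i, (u i : ℝ) * a i) = 0)} = ⋂ n, S n := by
  obtain ⟨S, hS, hS_eq⟩ := exists_nat_iInter_eq_iInter (fun s => IsOpen s ∧ Dense s)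
    ⟨isOpen_univ, dense_univ⟩
    (fun p : {u : Fin k → ℤ // u ≠ 0} × (Fin l → ℤ) => {a | intDot p.1.1 a ≠ intDot p.2 b})
    (fun p => ContinuousLinearMap.isOpen_dense_setOf_ne (intDot_ne_zero p.1.2) _)
  exact ⟨S, hS, by rw [hS_eq, setOf_dot_injective_and_disjoint_eq_iInter]⟩

/-- The set of `a ∈ ℝᵏ` such that `u ↦ u·a` on `ℤᵏ` has trivial kernel and the images of
`ℤᵏ` under `u ↦ u·a` and of `ℤˡ` under `v ↦ v·b` intersect only in `0` is a countable
intersection of open dense subsets of `ℝᵏ`. -/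
theorem stmt0 (k l : ℕ) (hk : 1 ≤ k) (hl : 1 ≤ l) (b : Fin l → ℝ) :
    ∃ S : ℕ → Set (Fin k → ℝ),
      (∀ n, IsOpen (S n) ∧ Dense (S n)) ∧
      {a : Fin k → ℝ |
        (∀ u : Fin k → ℤ, (∑ i, (u i : ℝ) * a i) = 0 → u = 0) ∧
        (∀ (u : Fin k → ℤ) (v : Fin l → ℤ),
          (∑ i, (u i : ℝ) * a i) = (∑ j, (v j : ℝ) * b j) →
          (∑ i, (u i : ℝ) * a i) = 0)} = ⋂ n, S n :=
  stmt0_general k l b
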